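/- arXiv:1905.11557 — 2 statements merged into one kernel-verified Lean document; each statement's English description precedes it below -/
import Mathlib

section
/- Let F(z,w) = (e^{g(z)} + w, z) for an entire function g. A point (z,w) ∈ ℂ² satisfying the system g(w + e^{g(z)}) - g(w) = πi and g(z - e^{g(w)}) - g(z) = -πi is a periodic point of F of period dividing 4, i.e., F⁴(z,w) = (z,w). -/
/-- For `F(z,w) = (e^{g(z)} + w, z)`, any solution of the system
`g(w + e^{g(z)}) - g(w) = πi`, `g(z - e^{g(w)}) - g(z) = -πi`
is a periodic point of period dividing 4: `F⁴(z,w) = (z,w)`. -/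
theorem henon_period_four_from_system
    (g : ℂ → ℂ) (hg : Differentiable ℂ g) (z w : ℂ)
    (h1 : g (w + Complex.exp (g z)) - g w = (Real.pi : ℂ) * Complex.I)
    (h2 : g (z - Complex.exp (g w)) - g z = -((Real.pi : ℂ) * Complex.I)) :
    (fun p : ℂ × ℂ => (Complex.exp (g p.1) + p.2, p.1))^[4] (z, w) = (z, w) := by
  have ea : Complex.exp (g (w + Complex.exp (g z))) = -Complex.exp (g w) := by
    have : g (w + Complex.exp (g z)) = g w + (Real.pi : ℂ) * Complex.I := by linear_combination h1
    rw [this, Complex.exp_add, Complex.exp_pi_mul_I]; ring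
  have eb : Complex.exp (g (z - Complex.exp (g w))) = -Complex.exp (g z) := by
    have : g (z - Complex.exp (g w)) = g z + (Real.pi : ℂ) * Complex.I * (-1) := by
      have := h2; ring_nf; ring_nf at this; linear_combination this
    rw [this]
    rw [show (Real.pi : ℂ) * Complex.I * (-1) = -((Real.pi:ℂ)*Complex.I) by ring,
      Complex.exp_add, Complex.exp_neg, Complex.exp_pi_mul_I]
    field_simp
  show (fun p : ℂ × ℂ => (Complex.exp (g p.1) + p.2, p.1))^[4] (z, w) = (z, w)
  simp only [Function.iterate_succ, Function.iterate_zero, Function.comp_apply, id_eq]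
  rw [show Complex.exp (g z) + w = w + Complex.exp (g z) from add_comm _ _, ea,
    show -Complex.exp (g w) + z = z - Complex.exp (g w) from by ring, eb]
  exact Prod.ext (by ring) (by ring)
end

section
/- Let B ⊆ ℂ² be a convex open set, G : B → ℂ² holomorphic, and suppose there is C > 0 such that ‖DG(p)v‖ ≥ C‖v‖ for all p ∈ B and v ∈ ℂ². If G is injective on B, then for any closed ball B̄(p₀, ρ) ⊆ B, the image G(B) contains the open ball of radius Cρ centered at G(p₀). -/
/-!
Holomorphic maps are `C¹`, so the inverse function theorem applies at every point of `B`, and the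
lower bound `‖DG(p)v‖ ≥ C‖v‖` makes the local inverses `K`-Lipschitz for any `K > C⁻¹`. Given
`q` with `‖q - G p₀‖ < Cρ`, lift the segment from `G p₀` to `q` by continuous induction: the set
of times `t` at which `G p₀ + t • (q - G p₀)` has a preimage within `K t ‖q - G p₀‖ < ρ` of `p₀`
contains `0`, is closed by compactness of closed balls, and is open to the right by the local
inverses. Hence it contains `1`.
-/

open Metric Set Filter Topology
open scoped NNReal

namespace Complex

variable {X E : Type*} [TopologicalSpace X] [NormedAddCommGroup E] [NormedSpace ℂ E]
  [CompleteSpace E]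

/-- By Weierstrass, the derivatives of `f x` converge locally uniformly as `x → x₀`. -/
theorem continuousAt_uncurry_deriv {f : X → ℂ → E} {U : Set ℂ} (hU : IsOpen U) {x₀ : X}
    {z₀ : ℂ} (hz₀ : z₀ ∈ U) (hd : ∀ᶠ x in 𝓝 x₀, DifferentiableOn ℂ (f x) U)
    (hc : ∀ z ∈ U, ContinuousAt ↿f (x₀, z)) :
    ContinuousAt (fun p : X × ℂ => deriv (f p.1) p.2) (x₀, z₀) := by
  have hconv : TendstoLocallyUniformlyOn f (f x₀) (𝓝 x₀) U := by
    refine hU.tendstoLocallyUniformlyOn_iff_forall_tendsto.2 fun z hz => ?_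
    have h := hc z hz
    rw [ContinuousAt, nhds_prod_eq] at h
    have h₀ : Tendsto (fun y : X × ℂ => f x₀ y.2) (𝓝 x₀ ×ˢ 𝓝 z) (𝓝 (f x₀ z)) :=
      h.comp (tendsto_const_nhds.prodMk tendsto_snd)
    exact (h₀.prodMk_nhds h).mono_right (nhds_le_uniformity _)
  have hcont : ContinuousAt (deriv (f x₀)) z₀ :=
    ((hd.self_of_nhds.analyticOnNhd hU).deriv z₀ hz₀).continuousAt
  have hunif := hU.tendstoLocallyUniformlyOn_iff_forall_tendsto.1 (hconv.deriv hd hU) z₀ hz₀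
  rw [ContinuousAt, nhds_prod_eq]
  exact (hcont.tendsto.comp tendsto_snd).congr_uniformity hunif

end Complex

section Holomorphic

variable {E F : Type*} [NormedAddCommGroup E] [NormedSpace ℂ E] [FiniteDimensional ℂ E]
  [NormedAddCommGroup F] [NormedSpace ℂ F] [CompleteSpace F] {G : E → F} {s : Set E}

/-- Each directional derivative `p ↦ DG(p)v` is the derivative at `0` of the family of slices
`z ↦ G (p + z • v)`. -/
theorem DifferentiableOn.continuousOn_fderiv_of_isOpen (hG : DifferentiableOn ℂ G s)
    (hs : IsOpen s) : ContinuousOn (fderiv ℂ G) s := by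
  intro p hp
  refine (continuousAt_clm_apply.2 fun v => ?_).continuousWithinAt
  have hW : IsOpen ((fun q : E × ℂ => q.1 + q.2 • v) ⁻¹' s) := hs.preimage (by fun_prop)
  obtain ⟨V, U, hV, hU, hpV, h0U, hVU⟩ := isOpen_prod_iff.1 hW p 0 (by simpa using hp)
  have hGat : ∀ x ∈ V, ∀ z ∈ U, DifferentiableAt ℂ G (x + z • v) := fun x hx z hz =>
    hG.differentiableAt (hs.mem_nhds (hVU (mk_mem_prod hx hz)))
  have hslices :=
    Complex.continuousAt_uncurry_deriv (f := fun x z => G (x + z • v)) hU h0U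
      (eventually_of_mem (hV.mem_nhds hpV) fun x hx z hz =>
        ((hGat x hx z hz).comp z (by fun_prop)).differentiableWithinAt)
      fun z hz => (hGat p hpV z hz).continuousAt.comp (f := fun q : E × ℂ => q.1 + q.2 • v)
        (by fun_prop)
  refine (hslices.comp (f := fun x : E => (x, (0 : ℂ))) (by fun_prop)).congr ?_
  filter_upwards [hs.mem_nhds hp] with x hx
  have := (hG.differentiableAt (hs.mem_nhds hx)).hasFDerivAt.comp_hasDerivAt_of_eq (0 : ℂ)
    (((hasDerivAt_id (0 : ℂ)).smul_const v).const_add x) (by simp)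
  exact this.deriv.trans (by rw [one_smul])

theorem DifferentiableOn.hasStrictFDerivAt_of_isOpen (hG : DifferentiableOn ℂ G s)
    (hs : IsOpen s) {p : E} (hp : p ∈ s) : HasStrictFDerivAt G (fderiv ℂ G p) p :=
  hasStrictFDerivAt_of_hasFDerivAt_of_continuousAt
    (eventually_of_mem (hs.mem_nhds hp) fun _ hx =>
      (hG.differentiableAt (hs.mem_nhds hx)).hasFDerivAt)
    ((hG.continuousOn_fderiv_of_isOpen hs).continuousAt (hs.mem_nhds hp))

end Holomorphic

section Continuation

theorem isClosed_setOf_exists_mem_closedBall_inter_Icc {E Y : Type*} [MetricSpace E]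
    [ProperSpace E] [TopologicalSpace Y] [T2Space Y] {G : E → Y} {γ : ℝ → Y} {p₀ : E} {r : ℝ}
    (hr : 0 ≤ r) (hG : ContinuousOn G (closedBall p₀ r)) (hγ : Continuous γ) :
    IsClosed ({t : ℝ | ∃ x ∈ closedBall p₀ (r * t), G x = γ t} ∩ Icc 0 1) := by
  set Z := {z ∈ Icc 0 1 ×ˢ closedBall p₀ r | z.2 ∈ closedBall p₀ (r * z.1) ∧ G z.2 = γ z.1}
  have hZ : IsCompact Z := by
    refine (isCompact_Icc.prod (isCompact_closedBall p₀ r)).of_isClosed_subset ?_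
      (sep_subset _ _)
    have hGZ : ContinuousOn (fun z : ℝ × E => (G z.2, γ z.1)) (Icc 0 1 ×ˢ closedBall p₀ r) :=
      (hG.comp continuous_snd.continuousOn fun z hz => hz.2).prodMk
        (hγ.comp continuous_fst).continuousOn
    have := (hGZ.preimage_isClosed_of_isClosed (isClosed_Icc.prod isClosed_closedBall)
      isClosed_diagonal).inter (isClosed_le (by fun_prop) (by fun_prop) :
        IsClosed {z : ℝ × E | dist z.2 p₀ ≤ r * z.1})
    convert this using 1
    ext z
    simp [Z, and_comm, and_left_comm]
  convert hZ.image continuous_fst |>.isClosed using 1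
  ext t
  constructor
  · rintro ⟨⟨x, hx, hGx⟩, ht⟩
    exact ⟨(t, x), ⟨⟨ht, closedBall_subset_closedBall (by nlinarith [ht.2]) hx⟩, hx, hGx⟩, rfl⟩
  · rintro ⟨⟨t, x⟩, ⟨⟨ht, -⟩, hx, hGx⟩, rfl⟩
    exact ⟨⟨x, hx, hGx⟩, ht⟩

variable {E F : Type*} [MetricSpace E] [ProperSpace E] [NormedAddCommGroup F] [NormedSpace ℝ F]

theorem mem_image_ball_of_eventually_exists_dist_le {G : E → F} {p₀ : E} {ρ : ℝ} {K : ℝ≥0}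
    (hG : ContinuousOn G (ball p₀ ρ))
    (hlift : ∀ p ∈ ball p₀ ρ, ∀ᶠ y in 𝓝 (G p), ∃ x, G x = y ∧ dist x p ≤ K * dist y (G p))
    {q : F} (hq : K * dist q (G p₀) < ρ) : q ∈ G '' ball p₀ ρ := by
  set d := dist q (G p₀)
  set r : ℝ := K * d
  have hr : 0 ≤ r := by positivity
  set γ : ℝ → F := fun t => AffineMap.lineMap (G p₀) q t
  have hγ : Continuous γ := AffineMap.lineMap_continuous
  set S := {t : ℝ | ∃ x ∈ closedBall p₀ (r * t), G x = γ t}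
  have hS : IsClosed (S ∩ Icc 0 1) :=
    isClosed_setOf_exists_mem_closedBall_inter_Icc hr (hG.mono (closedBall_subset_ball hq)) hγ
  have h0 : 0 ∈ S := ⟨p₀, by simp, by simp [γ]⟩
  have hstep : ∀ T ∈ S ∩ Ico 0 1, ∀ u ∈ Ioi T, (S ∩ Ioc T u).Nonempty := by
    rintro T ⟨⟨p, hp, hGp⟩, hT⟩ u hu
    have hpρ : p ∈ ball p₀ ρ := closedBall_subset_ball
      (lt_of_le_of_lt (mul_le_of_le_one_right hr hT.2.le) hq) hp
    have hliftT := hlift p hpρ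
    rw [hGp] at hliftT
    have hev : ∀ᶠ t in 𝓝[>] T, t ∈ Ioc T u ∧
        ∃ x, G x = γ t ∧ dist x p ≤ K * dist (γ t) (γ T) :=
      Eventually.and (Ioc_mem_nhdsGT hu)
        (nhdsWithin_le_nhds (hγ.continuousAt.eventually hliftT))
    obtain ⟨t, ht, x, hGx, hx⟩ := hev.exists
    refine ⟨t, ⟨x, ?_, hGx⟩, ht⟩
    rw [mem_closedBall] at hp ⊢
    rw [dist_lineMap_lineMap, Real.dist_eq, abs_of_pos (sub_pos.2 ht.1), dist_comm (G p₀)] at hx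
    calc dist x p₀ ≤ dist x p + dist p p₀ := dist_triangle _ _ _
      _ ≤ K * ((t - T) * d) + r * T := add_le_add hx hp
      _ = r * t := by ring
  obtain ⟨x, hx, hGx⟩ := hS.Icc_subset_of_forall_exists_gt h0 hstep (right_mem_Icc.2 zero_le_one)
  exact ⟨x, closedBall_subset_ball (by simpa using hq) (by simpa using hx), by simpa [γ] using hGx⟩

end Continuation

section InverseFunction

variable {𝕜 E F : Type*} [NontriviallyNormedField 𝕜] [NormedAddCommGroup E] [NormedSpace 𝕜 E]
  [NormedAddCommGroup F] [NormedSpace 𝕜 F]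

theorem ContinuousLinearMap.exists_equiv_of_le_norm [CompleteSpace 𝕜] [FiniteDimensional 𝕜 E]
    (f : E →L[𝕜] E) {C : ℝ} (hC : 0 < C) (hf : ∀ v, C * ‖v‖ ≤ ‖f v‖) :
    ∃ e : E ≃L[𝕜] E, (e : E →L[𝕜] E) = f := by
  have hinj : Function.Injective f := (f.antilipschitz_of_bound (K := ⟨C⁻¹, by positivity⟩)
    fun v => by
      show ‖v‖ ≤ C⁻¹ * ‖f v‖
      rw [inv_mul_eq_div, le_div_iff₀ hC, mul_comm]
      exact hf v).injective
  exact ⟨(LinearEquiv.ofInjectiveEndo (f : E →ₗ[𝕜] E) hinj).toContinuousLinearEquiv, by ext; rfl⟩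

theorem ContinuousLinearEquiv.norm_symm_le_inv {e : E ≃L[𝕜] F} {C : ℝ} (hC : 0 < C)
    (he : ∀ v, C * ‖v‖ ≤ ‖e v‖) : ‖(e.symm : F →L[𝕜] E)‖ ≤ C⁻¹ :=
  ContinuousLinearMap.opNorm_le_bound _ (inv_nonneg.2 hC.le) fun w => by
    rw [inv_mul_eq_div, le_div_iff₀ hC, mul_comm]
    simpa using he (e.symm w)

theorem HasStrictFDerivAt.eventually_exists_dist_le [CompleteSpace E] [CompleteSpace F]
    {G : E → F} {e : E ≃L[𝕜] F} {a : E} (hG : HasStrictFDerivAt G (e : E →L[𝕜] F) a) {K : ℝ≥0}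
    (hK : ‖(e.symm : F →L[𝕜] E)‖₊ < K) :
    ∀ᶠ y in 𝓝 (G a), ∃ x, G x = y ∧ dist x a ≤ K * dist y (G a) := by
  obtain ⟨s, hs, hlip⟩ := hG.to_localInverse.exists_lipschitzOnWith_of_nnnorm_lt K hK
  filter_upwards [hG.eventually_right_inverse, hs] with y hy hys
  refine ⟨_, hy, ?_⟩
  simpa using hlip.dist_le_mul y hys (G a) (mem_of_mem_nhds hs)

theorem ball_subset_image_ball_of_hasStrictFDerivAt [NormedSpace ℝ F] [CompleteSpace F]
    [ProperSpace E] {G : E → F} {p₀ : E} {ρ C : ℝ} (hC : 0 < C)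
    (hG : ∀ p ∈ ball p₀ ρ, ∃ e : E ≃L[𝕜] F,
      HasStrictFDerivAt G (e : E →L[𝕜] F) p ∧ ∀ v, C * ‖v‖ ≤ ‖e v‖) :
    ball (G p₀) (C * ρ) ⊆ G '' ball p₀ ρ := by
  intro q hq
  obtain ⟨d, hqd, hdρ⟩ := exists_between (mem_ball.1 hq)
  have hd : 0 < d := dist_nonneg.trans_lt hqd
  have hρ : 0 < ρ := pos_of_mul_pos_right (hd.trans hdρ) hC.le
  set K : ℝ≥0 := ⟨ρ / d, by positivity⟩
  have hCK : C⁻¹ < K := by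
    show C⁻¹ < ρ / d
    rwa [lt_div_iff₀ hd, inv_mul_lt_iff₀ hC]
  refine mem_image_ball_of_eventually_exists_dist_le (K := K)
    (fun p hp => (hG p hp).elim fun e he => he.1.continuousAt.continuousWithinAt)
    (fun p hp => ?_) ?_
  · obtain ⟨e, hGe, he⟩ := hG p hp
    exact hGe.eventually_exists_dist_le
      (NNReal.coe_lt_coe.1 ((ContinuousLinearEquiv.norm_symm_le_inv hC he).trans_lt hCK))
  · show ρ / d * dist q (G p₀) < ρ
    rwa [div_mul_eq_mul_div, div_lt_iff₀ hd, mul_lt_mul_iff_right₀ hρ]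

end InverseFunction

theorem image_contains_ball_of_expansive_general
    (B : Set (ℂ × ℂ)) (hBo : IsOpen B)
    (G : ℂ × ℂ → ℂ × ℂ) (hG : DifferentiableOn ℂ G B)
    (C : ℝ) (hC : 0 < C)
    (hlow : ∀ p ∈ B, ∀ v : ℂ × ℂ, C * ‖v‖ ≤ ‖fderiv ℂ G p v‖)
    (p₀ : ℂ × ℂ) (ρ : ℝ) (hball : Metric.closedBall p₀ ρ ⊆ B) :
    Metric.ball (G p₀) (C * ρ) ⊆ G '' B := by
  have hballB : ball p₀ ρ ⊆ B := ball_subset_closedBall.trans hball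
  refine (ball_subset_image_ball_of_hasStrictFDerivAt (𝕜 := ℂ) hC fun p hp => ?_).trans
    (image_mono hballB)
  obtain ⟨e, he⟩ := (fderiv ℂ G p).exists_equiv_of_le_norm hC (hlow p (hballB hp))
  refine ⟨e, he ▸ hG.hasStrictFDerivAt_of_isOpen hBo (hballB hp), fun v => ?_⟩
  simpa [← he] using hlow p (hballB hp) v

/-- If `G` is holomorphic and injective on a convex open set `B ⊆ ℂ²` with uniform
lower bound `‖DG(p)v‖ ≥ C‖v‖`, then for any closed ball `B̄(p₀,ρ) ⊆ B` the image
`G(B)` contains the open ball of radius `Cρ` centered at `G(p₀)`. -/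
theorem image_contains_ball_of_expansive
    (B : Set (ℂ × ℂ)) (hBc : Convex ℝ B) (hBo : IsOpen B)
    (G : ℂ × ℂ → ℂ × ℂ) (hG : DifferentiableOn ℂ G B)
    (C : ℝ) (hC : 0 < C)
    (hlow : ∀ p ∈ B, ∀ v : ℂ × ℂ, C * ‖v‖ ≤ ‖fderiv ℂ G p v‖)
    (hinj : Set.InjOn G B)
    (p₀ : ℂ × ℂ) (ρ : ℝ) (hρ : 0 < ρ) (hball : Metric.closedBall p₀ ρ ⊆ B) :
    Metric.ball (G p₀) (C * ρ) ⊆ G '' B :=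
  image_contains_ball_of_expansive_general B hBo G hG C hC hlow p₀ ρ hball
end
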